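/- arXiv:2203.08677 — 3 statements merged into one kernel-verified Lean document; each statement's English description precedes it below -/
import Mathlib

section
/- Let g : [0,T] → C be continuous with g(0) = 0, let μ be a finite complex measure on [0,T], and set f_n(t) = ∫_{[0,t]} n e^{−n(t−s)} μ(ds). Then for each t ∈ [0,T], ∫₀ᵗ g(t−s) f_n(s) ds converges as n → ∞ to ∫_{[0,t]} g(t−s) μ(ds). -/
/-!
With `k_r(x) = r e^{-r x}`, Fubini over the triangle `0 ≤ u ≤ s ≤ t` rewrites
`∫₀ᵗ g(t-s) f_r(s) ds` as `∫_{[0,t]} (k_r ⋆ g)(t-u) μ(du)`, where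
`(k_r ⋆ g)(y) = ∫₀ʸ k_r(y-s) g(s) ds`. On `[0, y]` the kernel `s ↦ k_r(y-s)` is nonnegative,
has mass `1 - e^{-ry} → 1` and concentrates at `y`, so `(k_r ⋆ g)(y) → g(y)` for `y > 0`;
at `y = 0` (the atom of `μ` at `u = t`) it is `0 = g(0)`. Since `‖k_r ⋆ g‖ ≤ sup ‖g‖`,
dominated convergence concludes.
-/

open MeasureTheory Filter Set Real Topology Function

section

variable {E : Type*} [NormedAddCommGroup E] [NormedSpace ℝ E]

theorem integral_Icc_integral_Icc_swap {μ ν : Measure ℝ} [SFinite μ] [SFinite ν]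
    {F : ℝ → ℝ → E} {t : ℝ}
    (hF : Integrable (uncurry F) ((μ.restrict (Icc 0 t)).prod (ν.restrict (Icc 0 t)))) :
    ∫ s in Icc 0 t, ∫ u in Icc 0 s, F s u ∂ν ∂μ = ∫ u in Icc 0 t, ∫ s in Icc u t, F s u ∂μ ∂ν := by
  set H : ℝ → ℝ → E := fun s u => {p : ℝ × ℝ | p.2 ≤ p.1}.indicator (uncurry F) (s, u)
  have hH : Integrable (uncurry H) ((μ.restrict (Icc 0 t)).prod (ν.restrict (Icc 0 t))) :=
    hF.indicator (measurableSet_le measurable_snd measurable_fst)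
  have hleft : ∀ s ∈ Icc 0 t, ∫ u in Icc 0 s, F s u ∂ν = ∫ u in Icc 0 t, H s u ∂ν := by
    intro s hs
    have hH_eq : H s = (Iic s).indicator (F s) := by ext u; simp [H, indicator_apply]
    have hset : Icc 0 t ∩ Iic s = Icc 0 s := by
      ext u; simp only [mem_inter_iff, mem_Icc, mem_Iic]; grind
    rw [hH_eq, setIntegral_indicator measurableSet_Iic, hset]
  have hright : ∀ u ∈ Icc 0 t, ∫ s in Icc u t, F s u ∂μ = ∫ s in Icc 0 t, H s u ∂μ := by
    intro u hu
    have hH_eq : (fun s => H s u) = (Ici u).indicator (fun s => F s u) := by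
      ext s; simp [H, indicator_apply]
    have hset : Icc 0 t ∩ Ici u = Icc u t := by
      ext s; simp only [mem_inter_iff, mem_Icc, mem_Ici]; grind
    rw [hH_eq, setIntegral_indicator measurableSet_Ici, hset]
  rw [setIntegral_congr_fun measurableSet_Icc hleft, integral_integral_swap hH,
    setIntegral_congr_fun measurableSet_Icc hright]

lemma integrable_prod_mul_of_continuous {ν : Measure ℝ} [SFinite ν] {φ : ℝ × ℝ → ℂ}
    (hφ : Continuous φ) {w : ℝ → ℂ} {a b : ℝ} (hw : IntegrableOn w (Icc a b) ν) :
    Integrable (fun p => φ p * w p.2)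
      ((volume.restrict (Icc a b)).prod (ν.restrict (Icc a b))) := by
  obtain ⟨C, hC⟩ := ((isCompact_Icc (a := a) (b := b)).prod
    (isCompact_Icc (a := a) (b := b))).exists_bound_of_continuousOn hφ.continuousOn
  refine (hw.comp_snd _).bdd_mul (c := C) hφ.aestronglyMeasurable ?_
  rw [Measure.prod_restrict]
  filter_upwards [ae_restrict_mem (measurableSet_Icc.prod measurableSet_Icc)] using hC

noncomputable def expKernel (r x : ℝ) : ℝ := r * exp (-r * x)

lemma expKernel_nonneg {r : ℝ} (hr : 0 ≤ r) (x : ℝ) : 0 ≤ expKernel r x :=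
  mul_nonneg hr (exp_pos _).le

lemma expKernel_antitone {r : ℝ} (hr : 0 ≤ r) : Antitone (expKernel r) := fun x y hxy =>
  mul_le_mul_of_nonneg_left (exp_le_exp.2 (by nlinarith)) hr

@[fun_prop]
lemma continuous_expKernel (r : ℝ) : Continuous (expKernel r) := by
  unfold expKernel
  fun_prop

lemma integral_expKernel (r a : ℝ) : ∫ x in 0..a, expKernel r x = 1 - exp (-r * a) := by
  have hderiv (x : ℝ) : HasDerivAt (fun x => -exp (-r * x)) (expKernel r x) x := by
    have hlin : HasDerivAt (fun x => -r * x) (-r) x := by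
      simpa using (hasDerivAt_id x).const_mul (-r)
    exact hlin.exp.fun_neg.congr_deriv (by unfold expKernel; ring)
  rw [intervalIntegral.integral_eq_sub_of_hasDerivAt (fun x _ => hderiv x)
    ((continuous_expKernel r).intervalIntegrable 0 a)]
  simp only [mul_zero, exp_zero]
  ring

lemma tendsto_expKernel_atTop {x : ℝ} (hx : 0 < x) :
    Tendsto (fun r => expKernel r x) atTop (𝓝 0) := by
  have h := ((tendsto_pow_mul_exp_neg_atTop_nhds_zero 1).comp
    (tendsto_id.atTop_mul_const hx)).const_mul x⁻¹
  rw [mul_zero] at h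
  refine h.congr fun r => ?_
  simp only [comp_apply, id, pow_one, expKernel]
  field_simp

noncomputable def expMollify (r : ℝ) (g : ℝ → E) (y : ℝ) : E :=
  ∫ s in 0..y, expKernel r (y - s) • g s

lemma integral_expKernel_sub (r y : ℝ) : ∫ s in 0..y, expKernel r (y - s) = 1 - exp (-r * y) := by
  rw [intervalIntegral.integral_comp_sub_left (expKernel r), sub_self, sub_zero,
    integral_expKernel]

lemma norm_expMollify_le {r y M : ℝ} {g : ℝ → E} (hr : 0 ≤ r) (hy : 0 ≤ y)
    (hg : ∀ s ∈ Icc 0 y, ‖g s‖ ≤ M) : ‖expMollify r g y‖ ≤ M := by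
  have hM : 0 ≤ M := (norm_nonneg _).trans (hg y ⟨hy, le_rfl⟩)
  calc ‖expMollify r g y‖ ≤ ∫ s in 0..y, expKernel r (y - s) * M := by
        refine intervalIntegral.norm_integral_le_of_norm_le hy (ae_of_all _ fun s hs => ?_)
          (Continuous.intervalIntegrable (by fun_prop) _ _)
        rw [norm_smul, norm_of_nonneg (expKernel_nonneg hr _)]
        exact mul_le_mul_of_nonneg_left (hg s (Ioc_subset_Icc_self hs)) (expKernel_nonneg hr _)
    _ = (1 - exp (-r * y)) * M := by
        rw [intervalIntegral.integral_mul_const, integral_expKernel_sub]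
    _ ≤ M := mul_le_of_le_one_left hM (by linarith [exp_pos (-r * y)])

lemma expMollify_eq_exp_smul (r : ℝ) (g : ℝ → E) (y : ℝ) :
    expMollify r g y = exp (-r * y) • ∫ s in 0..y, (r * exp (r * s)) • g s := by
  rw [expMollify, ← intervalIntegral.integral_smul]
  congr 1 with s
  rw [smul_smul, expKernel, ← mul_assoc, mul_comm (exp _), mul_assoc, ← exp_add]
  ring_nf

lemma continuous_expMollify (r : ℝ) {g : ℝ → E} (hg : Continuous g) :
    Continuous (expMollify r g) := by
  simp_rw [funext (expMollify_eq_exp_smul r g)]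
  exact (by fun_prop : Continuous fun y => exp (-r * y)).smul
    (intervalIntegral.continuous_primitive
      (fun a b => Continuous.intervalIntegrable (by fun_prop) a b) 0)

lemma expMollify_sub_eq (r : ℝ) (g : ℝ → E) (t u : ℝ) :
    expMollify r g (t - u) = ∫ s in u..t, expKernel r (s - u) • g (t - s) := by
  rw [expMollify, ← sub_self t, ← intervalIntegral.integral_comp_sub_left]
  simp_rw [sub_sub_sub_cancel_left]

theorem tendsto_expMollify [CompleteSpace E] {g : ℝ → E} {y : ℝ} (hy : 0 < y)
    (hg : ContinuousOn g (Icc 0 y)) :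
    Tendsto (fun r => expMollify r g y) atTop (𝓝 (g y)) := by
  simp only [expMollify, intervalIntegral.integral_of_le hy.le, ← integral_Icc_eq_integral_Ioc]
  refine tendsto_setIntegral_peak_smul_of_integrableOn_of_tendsto measurableSet_Icc
    measurableSet_Icc subset_rfl self_mem_nhdsWithin measure_Icc_lt_top.ne ?_ ?_ ?_
    (Eventually.of_forall fun r => (by fun_prop : Continuous _).aestronglyMeasurable)
    hg.integrableOn_Icc (hg y ⟨hy.le, le_rfl⟩)
  · filter_upwards [eventually_ge_atTop 0] with r hr s _ using expKernel_nonneg hr _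
  · intro U hU hyU
    obtain ⟨δ, hδ, hball⟩ := Metric.isOpen_iff.1 hU y hyU
    rw [Metric.tendstoUniformlyOn_iff]
    intro ε hε
    filter_upwards [eventually_ge_atTop 0, (tendsto_order.1 (tendsto_expKernel_atTop hδ)).2 ε hε]
      with r hr hrε s hs
    have hδs : δ ≤ y - s := by
      by_contra! h
      refine hs.2 (hball ?_)
      rw [Metric.mem_ball, dist_comm, dist_eq, abs_of_nonneg (sub_nonneg.2 hs.1.2)]
      exact h
    rw [Pi.zero_apply, dist_zero_left, norm_of_nonneg (expKernel_nonneg hr _)]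
    exact (expKernel_antitone hr hδs).trans_lt hrε
  · simp only [integral_Icc_eq_integral_Ioc, ← intervalIntegral.integral_of_le hy.le,
      integral_expKernel_sub]
    have hexp : Tendsto (fun r => exp (-r * y)) atTop (𝓝 0) := by
      simpa only [neg_mul, comp_def, id] using tendsto_exp_neg_atTop_nhds_zero.comp
        (tendsto_id.atTop_mul_const hy)
    simpa using hexp.const_sub 1

end

lemma intervalIntegral_mul_integral_expKernel_smul_eq {ν : Measure ℝ} [SFinite ν] {g : ℝ → ℂ}
    (hg : Continuous g) {w : ℝ → ℂ} {t : ℝ} (ht : 0 ≤ t) (hw : IntegrableOn w (Icc 0 t) ν)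
    (r : ℝ) :
    ∫ s in 0..t, g (t - s) * ∫ u in Icc 0 s, expKernel r (s - u) • w u ∂ν
      = ∫ u in Icc 0 t, expMollify r g (t - u) * w u ∂ν := by
  have hF : Integrable (uncurry fun s u => g (t - s) * (expKernel r (s - u) • w u))
      ((volume.restrict (Icc 0 t)).prod (ν.restrict (Icc 0 t))) := by
    refine (integrable_prod_mul_of_continuous
      (φ := fun p => g (t - p.1) * expKernel r (p.1 - p.2)) (by fun_prop) hw).congr
      (ae_of_all _ fun p => ?_)
    simp only [uncurry, Complex.real_smul]
    ring
  rw [intervalIntegral.integral_of_le ht, ← integral_Icc_eq_integral_Ioc]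
  simp_rw [← integral_const_mul]
  rw [integral_Icc_integral_Icc_swap hF]
  refine setIntegral_congr_fun measurableSet_Icc fun u hu => ?_
  rw [expMollify_sub_eq, intervalIntegral.integral_of_le hu.2, ← integral_Icc_eq_integral_Ioc,
    ← integral_mul_const]
  refine integral_congr_ae (ae_of_all _ fun s => ?_)
  simp only [Complex.real_smul]
  ring

theorem tendsto_integral_mul_integral_expKernel_smul_of_continuous {ν : Measure ℝ} [SFinite ν]
    {g : ℝ → ℂ} (hg : Continuous g) (hg0 : g 0 = 0) {w : ℝ → ℂ} {t : ℝ} (ht : 0 ≤ t)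
    (hw : IntegrableOn w (Icc 0 t) ν) :
    Tendsto (fun r => ∫ s in 0..t, g (t - s) * ∫ u in Icc 0 s, expKernel r (s - u) • w u ∂ν)
      atTop (𝓝 (∫ u in Icc 0 t, g (t - u) * w u ∂ν)) := by
  simp_rw [intervalIntegral_mul_integral_expKernel_smul_eq hg ht hw]
  obtain ⟨M, hM⟩ := isCompact_Icc.exists_bound_of_continuousOn (hg.continuousOn (s := Icc 0 t))
  refine tendsto_integral_filter_of_dominated_convergence (fun u => M * ‖w u‖)
    (Eventually.of_forall fun r => ((continuous_expMollify r hg).comp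
      (by fun_prop)).aestronglyMeasurable.mul hw.aestronglyMeasurable)
    ?_ (hw.norm.const_mul M) ?_
  · filter_upwards [eventually_ge_atTop 0] with r hr
    filter_upwards [ae_restrict_mem measurableSet_Icc] with u hu
    rw [norm_mul]
    gcongr
    exact norm_expMollify_le hr (sub_nonneg.2 hu.2)
      fun s hs => hM s ⟨hs.1, hs.2.trans (sub_le_self t hu.1)⟩
  · filter_upwards [ae_restrict_mem measurableSet_Icc] with u hu
    refine Tendsto.mul_const _ ?_
    rcases hu.2.lt_or_eq with hut | rfl
    · exact tendsto_expMollify (sub_pos.2 hut) hg.continuousOn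
    · simp [expMollify, hg0]

theorem tendsto_integral_mul_integral_expKernel_smul {ν : Measure ℝ} [SFinite ν] {g : ℝ → ℂ}
    {t : ℝ} (ht : 0 ≤ t) (hg : ContinuousOn g (Icc 0 t)) (hg0 : g 0 = 0) {w : ℝ → ℂ}
    (hw : IntegrableOn w (Icc 0 t) ν) :
    Tendsto (fun r => ∫ s in 0..t, g (t - s) * ∫ u in Icc 0 s, expKernel r (s - u) • w u ∂ν)
      atTop (𝓝 (∫ u in Icc 0 t, g (t - u) * w u ∂ν)) := by
  set G := IccExtend ht ((Icc 0 t).domRestrict g)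
  have hG : Continuous G := hg.domRestrict.Icc_extend'
  have hGg : EqOn G g (Icc 0 t) := fun x hx => IccExtend_of_mem ht _ hx
  have hsub : ∀ s ∈ Icc 0 t, t - s ∈ Icc 0 t := fun s hs =>
    ⟨sub_nonneg.2 hs.2, sub_le_self t hs.1⟩
  have hlim := tendsto_integral_mul_integral_expKernel_smul_of_continuous hG
    (by rw [hGg ⟨le_rfl, ht⟩, hg0]) ht hw
  rw [setIntegral_congr_fun measurableSet_Icc fun u hu => by rw [hGg (hsub u hu)]] at hlim
  refine hlim.congr fun r => intervalIntegral.integral_congr fun s hs => ?_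
  rw [uIcc_of_le ht] at hs
  simp only [hGg (hsub s hs)]

/-- The complex measure `μ` enters through its polar decomposition `dμ = w dν`, `ν = |μ|`. -/
theorem mollified_measure_convolution_tendsto_general (T : ℝ)
    (g : ℝ → ℂ) (hg : ContinuousOn g (Set.Icc 0 T)) (hg0 : g 0 = 0)
    (ν : Measure ℝ) [IsFiniteMeasure ν]
    (w : ℝ → ℂ) (hw : Measurable w) (hw1 : ∀ x, ‖w x‖ = 1)
    (fn : ℕ → ℝ → ℂ)
    (hfn : fn = fun (n : ℕ) (t : ℝ) =>
      ∫ s in Set.Icc 0 t, ((n : ℝ) * Real.exp (-(n : ℝ) * (t - s)) : ℝ) • w s ∂ν) :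
    ∀ t ∈ Set.Icc (0:ℝ) T,
      Tendsto (fun n : ℕ => ∫ s in (0:ℝ)..t, g (t - s) * fn n s) atTop
        (nhds (∫ s in Set.Icc 0 t, g (t - s) * w s ∂ν)) := by
  rintro t ⟨ht, htT⟩
  subst hfn
  have hwν : Integrable w ν :=
    (integrable_const (1 : ℝ)).mono' hw.aestronglyMeasurable (ae_of_all _ fun x => (hw1 x).le)
  exact (tendsto_integral_mul_integral_expKernel_smul ht (hg.mono (Icc_subset_Icc_right htT)) hg0
    hwν.integrableOn).comp tendsto_natCast_atTop_atTop

/-- Let `g : [0,T] → ℂ` be continuous with `g(0) = 0`, and let `μ` be a finite complex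
measure on `[0,T]`, represented via its polar decomposition `dμ = w d|μ|` with `ν = |μ|`
a finite measure supported on `[0,T]` and `w` a measurable unimodular density.  Setting
`f_n(t) = ∫_{[0,t]} n e^{-n(t-s)} μ(ds)`, for each `t ∈ [0,T]` one has
`∫₀ᵗ g(t-s) f_n(s) ds → ∫_{[0,t]} g(t-s) μ(ds)` as `n → ∞`. -/
theorem mollified_measure_convolution_tendsto (T : ℝ) (hT : 0 < T)
    (g : ℝ → ℂ) (hg : ContinuousOn g (Set.Icc 0 T)) (hg0 : g 0 = 0)
    (ν : Measure ℝ) [IsFiniteMeasure ν] (hsupp : ν (Set.Icc 0 T)ᶜ = 0)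
    (w : ℝ → ℂ) (hw : Measurable w) (hw1 : ∀ x, ‖w x‖ = 1)
    (fn : ℕ → ℝ → ℂ)
    (hfn : fn = fun (n : ℕ) (t : ℝ) =>
      ∫ s in Set.Icc 0 t, ((n : ℝ) * Real.exp (-(n : ℝ) * (t - s)) : ℝ) • w s ∂ν) :
    ∀ t ∈ Set.Icc (0:ℝ) T,
      Tendsto (fun n : ℕ => ∫ s in (0:ℝ)..t, g (t - s) * fn n s) atTop
        (nhds (∫ s in Set.Icc 0 t, g (t - s) * w s ∂ν)) :=
  mollified_measure_convolution_tendsto_general T g hg hg0 ν w hw hw1 fn hfn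
end

section
/- Suppose E : R₊ → R is measurable, and there exist h₀ ≥ 1 and positive constants c, C with c·t^{−H−3/2}e^{−λt} ≤ E(t) ≤ C·t^{−H−3/2}e^{−λt} for all t ≥ h₀, and E is nonnegative and integrable on R₊ with ∫₀^{h₀} e^{−λu}E(u)du > 0. Then there exist positive constants c', C' such that for all h ≥ h₀: c' h^{−(H+3/2)} e^{−λh} ≤ ∫₀^∞ E(h+u)E(u) du ≤ C' h^{−(H+3/2)} e^{−λh}. -/
open MeasureTheory Real

set_option maxHeartbeats 800000

/-- If a nonnegative integrable function `E` on `ℝ₊` satisfies the two-sided bound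
`E(t) ≍ t^{-H-3/2} e^{-λt}` for `t ≥ h₀` and `∫₀^{h₀} e^{-λu} E(u) du > 0`, then
`∫₀^∞ E(h+u) E(u) du ≍ h^{-(H+3/2)} e^{-λh}` for `h ≥ h₀`. -/
theorem autocovariance_asymptotics (H lam : ℝ)
    (hH : H ∈ Set.Ioo (0:ℝ) (1/2)) (hlam : 0 ≤ lam)
    (E : ℝ → ℝ) (hmeas : Measurable E)
    (h₀ : ℝ) (hh₀ : 1 ≤ h₀)
    (c C : ℝ) (hc : 0 < c) (hC : 0 < C)
    (hlow : ∀ t ≥ h₀, c * t ^ (-H - 3/2) * Real.exp (-lam * t) ≤ E t)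
    (hup : ∀ t ≥ h₀, E t ≤ C * t ^ (-H - 3/2) * Real.exp (-lam * t))
    (hnn : ∀ t ≥ (0:ℝ), 0 ≤ E t)
    (hint : IntegrableOn E (Set.Ioi 0))
    (hpos : 0 < ∫ u in (0:ℝ)..h₀, Real.exp (-lam * u) * E u) :
    ∃ c' C' : ℝ, 0 < c' ∧ 0 < C' ∧ ∀ h ≥ h₀,
      c' * h ^ (-(H + 3/2)) * Real.exp (-lam * h)
        ≤ (∫ u in Set.Ioi (0:ℝ), E (h + u) * E u) ∧
      (∫ u in Set.Ioi (0:ℝ), E (h + u) * E u)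
        ≤ C' * h ^ (-(H + 3/2)) * Real.exp (-lam * h) := by
  obtain ⟨hH0, hH2⟩ := hH
  have hexp : (-(H + 3/2) : ℝ) = -H - 3/2 := by ring
  have hαneg : (-H - 3/2 : ℝ) ≤ 0 := by linarith
  have h₀pos : (0:ℝ) < h₀ := by linarith
  set J := ∫ u in (0:ℝ)..h₀, Real.exp (-lam * u) * E u with hJ
  have hJIoc : J = ∫ u in Set.Ioc (0:ℝ) h₀, Real.exp (-lam * u) * E u := by
    rw [hJ, intervalIntegral.integral_of_le h₀pos.le]
  set IE := ∫ u in Set.Ioi (0:ℝ), E u with hIE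
  have hIEnn : 0 ≤ IE :=
    setIntegral_nonneg measurableSet_Ioi (fun x hx => hnn x (le_of_lt hx))
  refine ⟨c * 2 ^ (-(H + 3/2) : ℝ) * J, C * (IE + 1), by positivity, by positivity, ?_⟩
  intro h hh
  have hh1 : (1:ℝ) ≤ h := le_trans hh₀ hh
  have hhpos : (0:ℝ) < h := by linarith
  have hXpos : 0 < h ^ (-(H + 3/2) : ℝ) * Real.exp (-lam * h) := by positivity
  -- basic pointwise facts
  have key_up : ∀ u ∈ Set.Ioi (0:ℝ),
      E (h + u) * E u ≤ (C * h ^ (-(H + 3/2) : ℝ) * Real.exp (-lam * h)) * E u := by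
    intro u hu
    have hu0 : (0:ℝ) < u := hu
    have hhu : h₀ ≤ h + u := by linarith
    have h1 : E (h + u) ≤ C * (h + u) ^ (-H - 3/2) * Real.exp (-lam * (h + u)) :=
      hup _ hhu
    have h2 : (h + u) ^ (-H - 3/2 : ℝ) ≤ h ^ (-H - 3/2 : ℝ) :=
      Real.rpow_le_rpow_of_nonpos hhpos (by linarith) hαneg
    have h3 : Real.exp (-lam * (h + u)) ≤ Real.exp (-lam * h) := by
      apply Real.exp_le_exp.mpr; nlinarith
    have h4 : E (h + u) ≤ C * h ^ (-(H + 3/2) : ℝ) * Real.exp (-lam * h) := by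
      rw [hexp]
      calc E (h + u) ≤ C * (h + u) ^ (-H - 3/2) * Real.exp (-lam * (h + u)) := h1
        _ ≤ C * h ^ (-H - 3/2) * Real.exp (-lam * h) := by
            have he1 : (0:ℝ) ≤ Real.exp (-lam * (h + u)) := (Real.exp_pos _).le
            exact mul_le_mul (mul_le_mul_of_nonneg_left h2 hC.le) h3 he1 (by positivity)
    have hE : 0 ≤ E u := hnn u hu0.le
    exact mul_le_mul_of_nonneg_right h4 hE
  have hEnn : ∀ u ∈ Set.Ioi (0:ℝ), 0 ≤ E (h + u) * E u := by
    intro u hu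
    exact mul_nonneg (hnn _ (by simp only [Set.mem_Ioi] at hu; linarith)) (hnn _ (le_of_lt hu))
  -- integrability of the product
  have hintf : IntegrableOn (fun u => E (h + u) * E u) (Set.Ioi 0) := by
    have hg : IntegrableOn (fun u => (C * h ^ (-(H + 3/2) : ℝ) * Real.exp (-lam * h)) * E u)
        (Set.Ioi 0) := hint.const_mul _
    refine hg.mono' ?_ ?_
    · exact ((hmeas.comp (measurable_const.add measurable_id)).mul hmeas).aestronglyMeasurable
    · rw [ae_restrict_iff' measurableSet_Ioi]
      filter_upwards with u hu
      rw [Real.norm_eq_abs, abs_of_nonneg (hEnn u hu)]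
      exact key_up u hu
  have hintg : IntegrableOn (fun u => (C * h ^ (-(H + 3/2) : ℝ) * Real.exp (-lam * h)) * E u)
      (Set.Ioi 0) := hint.const_mul _
  constructor
  · -- lower bound
    have hsub : Set.Ioc (0:ℝ) h₀ ⊆ Set.Ioi 0 := Set.Ioc_subset_Ioi_self
    have step1 : (∫ u in Set.Ioc (0:ℝ) h₀, E (h + u) * E u)
        ≤ ∫ u in Set.Ioi (0:ℝ), E (h + u) * E u := by
      apply setIntegral_mono_set hintf
      · rw [Filter.EventuallyLE, ae_restrict_iff' measurableSet_Ioi]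
        filter_upwards with u hu; exact hEnn u hu
      · exact Filter.Eventually.of_forall hsub
    have key_low : ∀ u ∈ Set.Ioc (0:ℝ) h₀,
        (c * 2 ^ (-(H + 3/2) : ℝ) * h ^ (-(H + 3/2) : ℝ) * Real.exp (-lam * h))
          * (Real.exp (-lam * u) * E u) ≤ E (h + u) * E u := by
      intro u hu
      obtain ⟨hu0, huh₀⟩ := hu
      have hhu : h₀ ≤ h + u := by linarith
      have h1 : c * (h + u) ^ (-H - 3/2) * Real.exp (-lam * (h + u)) ≤ E (h + u) :=
        hlow _ hhu
      have h2 : (2 * h) ^ (-H - 3/2 : ℝ) ≤ (h + u) ^ (-H - 3/2 : ℝ) :=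
        Real.rpow_le_rpow_of_nonpos (by linarith) (by linarith) hαneg
      have h3 : (2 * h) ^ (-H - 3/2 : ℝ)
          = 2 ^ (-H - 3/2 : ℝ) * h ^ (-H - 3/2 : ℝ) :=
        Real.mul_rpow (by norm_num) hhpos.le
      have h4 : Real.exp (-lam * (h + u)) = Real.exp (-lam * h) * Real.exp (-lam * u) := by
        rw [← Real.exp_add]; ring_nf
      have h5 : c * 2 ^ (-(H + 3/2) : ℝ) * h ^ (-(H + 3/2) : ℝ) * Real.exp (-lam * h)
          * Real.exp (-lam * u) ≤ E (h + u) := by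
        rw [hexp]
        calc c * 2 ^ (-H - 3/2 : ℝ) * h ^ (-H - 3/2 : ℝ) * Real.exp (-lam * h)
              * Real.exp (-lam * u)
            = c * (2 * h) ^ (-H - 3/2 : ℝ) * Real.exp (-lam * (h + u)) := by
              rw [h3, h4]; ring
          _ ≤ c * (h + u) ^ (-H - 3/2) * Real.exp (-lam * (h + u)) := by
              exact mul_le_mul_of_nonneg_right
                (mul_le_mul_of_nonneg_left h2 hc.le) (Real.exp_pos _).le
          _ ≤ E (h + u) := h1
      have hE : 0 ≤ E u := hnn u hu0.le
      calc (c * 2 ^ (-(H + 3/2) : ℝ) * h ^ (-(H + 3/2) : ℝ) * Real.exp (-lam * h))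
            * (Real.exp (-lam * u) * E u)
          = (c * 2 ^ (-(H + 3/2) : ℝ) * h ^ (-(H + 3/2) : ℝ) * Real.exp (-lam * h)
            * Real.exp (-lam * u)) * E u := by ring
        _ ≤ E (h + u) * E u := mul_le_mul_of_nonneg_right h5 hE
    -- integrability of minorant on Ioc
    have hintEIoc : IntegrableOn E (Set.Ioc (0:ℝ) h₀) := hint.mono_set hsub
    have hexpE : IntegrableOn (fun u => Real.exp (-lam * u) * E u) (Set.Ioc (0:ℝ) h₀) := by
      refine hintEIoc.mono' ?_ ?_
      · exact ((Measurable.exp (measurable_id.const_mul (-lam))).mul hmeas).aestronglyMeasurable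
      · rw [ae_restrict_iff' measurableSet_Ioc]
        filter_upwards with u hu
        have hE : 0 ≤ E u := hnn u hu.1.le
        have he : Real.exp (-lam * u) ≤ 1 := by
          rw [Real.exp_le_one_iff]; nlinarith [hu.1]
        rw [Real.norm_eq_abs, abs_of_nonneg (mul_nonneg (Real.exp_pos _).le hE)]
        calc Real.exp (-lam * u) * E u ≤ 1 * E u :=
              mul_le_mul_of_nonneg_right he hE
          _ = E u := one_mul _
    have hintm : IntegrableOn
        (fun u => (c * 2 ^ (-(H + 3/2) : ℝ) * h ^ (-(H + 3/2) : ℝ) * Real.exp (-lam * h))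
          * (Real.exp (-lam * u) * E u)) (Set.Ioc (0:ℝ) h₀) :=
      hexpE.const_mul _
    have step2 : (c * 2 ^ (-(H + 3/2) : ℝ) * h ^ (-(H + 3/2) : ℝ) * Real.exp (-lam * h)) * J
        ≤ ∫ u in Set.Ioc (0:ℝ) h₀, E (h + u) * E u := by
      rw [hJIoc, ← integral_const_mul]
      exact setIntegral_mono_on hintm (hintf.mono_set hsub) measurableSet_Ioc key_low
    calc c * 2 ^ (-(H + 3/2) : ℝ) * J * h ^ (-(H + 3/2)) * Real.exp (-lam * h)
        = (c * 2 ^ (-(H + 3/2) : ℝ) * h ^ (-(H + 3/2) : ℝ) * Real.exp (-lam * h)) * J := by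
          ring
      _ ≤ ∫ u in Set.Ioc (0:ℝ) h₀, E (h + u) * E u := step2
      _ ≤ _ := step1
  · -- upper bound
    calc (∫ u in Set.Ioi (0:ℝ), E (h + u) * E u)
        ≤ ∫ u in Set.Ioi (0:ℝ),
            (C * h ^ (-(H + 3/2) : ℝ) * Real.exp (-lam * h)) * E u :=
          setIntegral_mono_on hintf hintg measurableSet_Ioi key_up
      _ = (C * h ^ (-(H + 3/2) : ℝ) * Real.exp (-lam * h)) * IE := by
          rw [integral_const_mul]
      _ ≤ C * (IE + 1) * h ^ (-(H + 3/2)) * Real.exp (-lam * h) := by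
          nlinarith [hXpos, Real.rpow_nonneg hhpos.le (-(H + 3/2) : ℝ),
            (Real.exp_pos (-lam * h)).le]
end

section
/- Let ν(x) = 1_{(0,∞)}(x) x^{k/2−1} e^{−x/2} / (2^{k/2} Γ(k/2)) be the χ² density with k > 0 degrees of freedom, and let ρ(x) = min{1, √x} for x > 0. Then the function x ↦ ρ(x)ν(x) (extended by 0 to R) satisfies: for every λ ∈ (0, min{k/2, 1}) there exists C > 0 with ∫_R |ρν(x+h) − ρν(x)| dx ≤ C|h|^λ for all h ∈ [−1,1]. -/
/-!
Near the origin `ρν` behaves like `x ^ ((k - 1) / 2)`, so for a shift `h > 0` the part of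
`∫ |f (x + h) - f x|` over `x ≤ h` is at most `2 ∫₀^{2h} |f| = O(h ^ ((k + 1) / 2))`.
For `x > h` the mean value theorem for right derivatives (`f` has a kink at `1`) gives
`|f (x + h) - f x| ≤ (K x ^ (λ - 2) + M e^{-x/4}) h`, whose integral over `(h, ∞)` is
`O(h ^ λ)` because `λ < 1`. Negative shifts reduce to positive ones by translation invariance.
-/

open MeasureTheory Real Set Filter Topology

section ShiftDifference

variable {f : ℝ → ℝ}

lemma integral_abs_comp_add_neg_sub (h : ℝ) :
    ∫ x, |f (x + -h) - f x| = ∫ x, |f (x + h) - f x| := by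
  rw [← integral_add_right_eq_self (fun x => |f (x + -h) - f x|) h]
  simp only [add_neg_cancel_right, abs_sub_comm]

lemma integral_abs_comp_add_sub_le (hf : Integrable f) (hf0 : ∀ x ≤ 0, f x = 0) {h : ℝ}
    (hh : 0 < h) :
    ∫ x, |f (x + h) - f x| ≤
      2 * (∫ x in (0)..(2 * h), |f x|) + ∫ x in Ioi h, |f (x + h) - f x| := by
  have hΔ : Integrable fun x => |f (x + h) - f x| := ((hf.comp_add_right h).sub hf).abs
  have habs : ∀ a b, IntervalIntegrable (fun x => |f x|) volume a b :=
    fun _ _ => hf.abs.intervalIntegrable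
  have hzero : ∀ x ∉ Ioi (-h), |f (x + h) - f x| = 0 := by
    intro x hx
    rw [notMem_Ioi] at hx
    rw [hf0 _ (by linarith), hf0 x (by linarith), sub_zero, abs_zero]
  have hsplit : ∫ x, |f (x + h) - f x| =
      (∫ x in (-h)..h, |f (x + h) - f x|) + ∫ x in Ioi h, |f (x + h) - f x| := by
    rw [← setIntegral_eq_integral_of_forall_compl_eq_zero hzero,
      ← Ioc_union_Ioi_eq_Ioi (by linarith : -h ≤ h),
      setIntegral_union (Ioc_disjoint_Ioi le_rfl) measurableSet_Ioi hΔ.integrableOn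
        hΔ.integrableOn, intervalIntegral.integral_of_le (by linarith)]
  have hshift : ∫ x in (-h)..h, |f (x + h)| = ∫ x in (0)..(2 * h), |f x| := by
    rw [intervalIntegral.integral_comp_add_right (fun x => |f x|), neg_add_cancel, two_mul]
  have hleft : ∫ x in (-h)..0, |f x| = 0 := by
    rw [intervalIntegral.integral_congr (g := fun _ => 0) fun x hx => ?_,
      intervalIntegral.integral_zero]
    rw [uIcc_of_le (by linarith)] at hx
    simp [hf0 x hx.2]
  have hunshifted : ∫ x in (-h)..h, |f x| ≤ ∫ x in (0)..(2 * h), |f x| := by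
    calc ∫ x in (-h)..h, |f x| ≤ ∫ x in (-h)..(2 * h), |f x| :=
          intervalIntegral.integral_mono_interval le_rfl (by linarith) (by linarith)
            (Eventually.of_forall fun _ => abs_nonneg _) (habs _ _)
      _ = ∫ x in (0)..(2 * h), |f x| := by
          rw [← intervalIntegral.integral_add_adjacent_intervals (habs _ 0) (habs 0 _), hleft,
            zero_add]
  have hnear : ∫ x in (-h)..h, |f (x + h) - f x| ≤ 2 * ∫ x in (0)..(2 * h), |f x| := by
    calc ∫ x in (-h)..h, |f (x + h) - f x| ≤ ∫ x in (-h)..h, (|f (x + h)| + |f x|) :=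
          intervalIntegral.integral_mono_on (by linarith) hΔ.intervalIntegrable
            ((hf.comp_add_right h).abs.intervalIntegrable.add (habs _ _))
            fun x _ => abs_sub _ _
      _ = (∫ x in (-h)..h, |f (x + h)|) + ∫ x in (-h)..h, |f x| :=
          intervalIntegral.integral_add (hf.comp_add_right h).abs.intervalIntegrable (habs _ _)
      _ ≤ 2 * ∫ x in (0)..(2 * h), |f x| := by linarith
  linarith

lemma intervalIntegral_abs_le_of_abs_le_rpow {A β t : ℝ} (hβ : -1 < β) (ht : 0 ≤ t)
    (hfi : IntervalIntegrable f volume 0 t) (hfβ : ∀ x > 0, |f x| ≤ A * x ^ β) :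
    ∫ x in (0)..t, |f x| ≤ A * (t ^ (β + 1) / (β + 1)) := by
  calc ∫ x in (0)..t, |f x| ≤ ∫ x in (0)..t, A * x ^ β :=
        intervalIntegral.integral_mono_on_of_le_Ioo ht hfi.abs
          ((intervalIntegral.intervalIntegrable_rpow' hβ).const_mul A) fun x hx => hfβ x hx.1
    _ = A * (t ^ (β + 1) / (β + 1)) := by
        rw [intervalIntegral.integral_const_mul, integral_rpow (Or.inl hβ),
          zero_rpow (by linarith), sub_zero]

lemma exp_neg_div_four_eq (x : ℝ) : exp (-x / 4) = exp (-4⁻¹ * x) := by ring_nf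

lemma integrableOn_Ioi_rpow_add_exp {q K M h : ℝ} (hq : q < -1) (hh : 0 < h) :
    IntegrableOn (fun x => K * x ^ q + M * exp (-x / 4)) (Ioi h) := by
  simp only [exp_neg_div_four_eq]
  exact ((integrableOn_Ioi_rpow_of_lt hq hh).const_mul K).add
    ((exp_neg_integrableOn_Ioi h (by norm_num : (0:ℝ) < 4⁻¹)).const_mul M)

lemma integral_Ioi_rpow_add_exp {q K M h : ℝ} (hq : q < -1) (hh : 0 < h) :
    ∫ x in Ioi h, (K * x ^ q + M * exp (-x / 4)) =
      K * (h ^ (q + 1) / -(q + 1)) + 4 * M * exp (-h / 4) := by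
  simp only [exp_neg_div_four_eq]
  rw [integral_add ((integrableOn_Ioi_rpow_of_lt hq hh).const_mul K)
      ((exp_neg_integrableOn_Ioi h (by norm_num : (0:ℝ) < 4⁻¹)).const_mul M),
    integral_const_mul, integral_const_mul, integral_Ioi_rpow_of_lt hq hh,
    integral_exp_mul_Ioi (by norm_num) h]
  field_simp

theorem exists_integral_abs_comp_add_sub_le_rpow {β q lam A K M : ℝ} (hf : Integrable f)
    (hf0 : ∀ x ≤ 0, f x = 0) (hβ : -1 < β) (hfβ : ∀ x > 0, |f x| ≤ A * x ^ β) (hq : q < -1)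
    (hK : 0 ≤ K) (hM : 0 ≤ M)
    (hlip : ∀ x > 0, ∀ h > 0, |f (x + h) - f x| ≤ (K * x ^ q + M * exp (-x / 4)) * h)
    (hlβ : lam ≤ β + 1) (hlq : lam ≤ q + 2) (hl1 : lam ≤ 1) :
    ∃ C, 0 < C ∧ ∀ h ∈ Ioc (0:ℝ) 1, ∫ x, |f (x + h) - f x| ≤ C * h ^ lam := by
  have hA : 0 ≤ A := by simpa using (abs_nonneg _).trans (hfβ 1 one_pos)
  set C₀ := 2 * A * (2 ^ (β + 1) / (β + 1))
  set C₁ := K / -(q + 1)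
  have hC₀ : 0 ≤ C₀ := mul_nonneg (by positivity) (div_nonneg (by positivity) (by linarith))
  have hC₁ : 0 ≤ C₁ := div_nonneg hK (by linarith)
  refine ⟨C₀ + C₁ + 4 * M + 1, by positivity, fun h ⟨hh0, hh1⟩ => ?_⟩
  have hnear := intervalIntegral_abs_le_of_abs_le_rpow hβ (by linarith : 0 ≤ 2 * h)
    hf.intervalIntegrable hfβ
  have htail : ∫ x in Ioi h, |f (x + h) - f x| ≤
      (K * (h ^ (q + 1) / -(q + 1)) + 4 * M * exp (-h / 4)) * h := by
    rw [← integral_Ioi_rpow_add_exp hq hh0, ← integral_mul_const]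
    exact integral_mono_of_nonneg (Eventually.of_forall fun _ => abs_nonneg _)
      ((integrableOn_Ioi_rpow_add_exp hq hh0).mul_const h)
      ((ae_restrict_iff' measurableSet_Ioi).2
        (Eventually.of_forall fun x hx => hlip x (hh0.trans hx) h hh0))
  have hpow : ∀ {s}, lam ≤ s → h ^ s ≤ h ^ lam := rpow_le_rpow_of_exponent_ge hh0 hh1
  have hlin : exp (-h / 4) * h ≤ h ^ lam :=
    calc exp (-h / 4) * h ≤ 1 * h ^ (1 : ℝ) := by
          rw [rpow_one]; gcongr; exact exp_le_one_iff.2 (by linarith)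
      _ ≤ h ^ lam := by rw [one_mul]; exact hpow hl1
  have hsplit : (2 * h) ^ (β + 1) = 2 ^ (β + 1) * h ^ (β + 1) := mul_rpow zero_le_two hh0.le
  have hmerge : h ^ (q + 1) * h = h ^ (q + 2) := by
    rw [← rpow_add_one hh0.ne']; ring_nf
  calc ∫ x, |f (x + h) - f x|
      ≤ 2 * (∫ x in (0)..(2 * h), |f x|) + ∫ x in Ioi h, |f (x + h) - f x| :=
        integral_abs_comp_add_sub_le hf hf0 hh0
    _ ≤ 2 * (A * ((2 * h) ^ (β + 1) / (β + 1))) +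
          (K * (h ^ (q + 1) / -(q + 1)) + 4 * M * exp (-h / 4)) * h := by gcongr
    _ = C₀ * h ^ (β + 1) + C₁ * h ^ (q + 2) + 4 * M * (exp (-h / 4) * h) := by
        rw [hsplit, ← hmerge]; ring
    _ ≤ C₀ * h ^ lam + C₁ * h ^ lam + 4 * M * h ^ lam := by
        gcongr ?_ + ?_ + ?_
        exacts [mul_le_mul_of_nonneg_left (hpow hlβ) hC₀, mul_le_mul_of_nonneg_left (hpow hlq) hC₁,
          mul_le_mul_of_nonneg_left hlin (by positivity)]
    _ ≤ (C₀ + C₁ + 4 * M + 1) * h ^ lam := by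
        nlinarith [rpow_nonneg hh0.le lam]

lemma integral_abs_comp_add_sub_le_mul_abs_rpow {C lam : ℝ} (hC : 0 ≤ C)
    (hpos : ∀ h ∈ Ioc (0:ℝ) 1, ∫ x, |f (x + h) - f x| ≤ C * h ^ lam) :
    ∀ h ∈ Icc (-1:ℝ) 1, ∫ x, |f (x + h) - f x| ≤ C * |h| ^ lam := by
  intro h hh
  rcases lt_trichotomy h 0 with hneg | rfl | hpos'
  · rw [← integral_abs_comp_add_neg_sub, abs_of_neg hneg]
    exact hpos (-h) ⟨by linarith, by linarith [hh.1]⟩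
  · simp only [add_zero, sub_self, abs_zero, integral_zero]
    exact mul_nonneg hC (rpow_nonneg le_rfl lam)
  · rw [abs_of_pos hpos']
    exact hpos h ⟨hpos', hh.2⟩

end ShiftDifference

lemma hasDerivAt_rpow_mul_exp_neg_half (p : ℝ) {y : ℝ} (hy : 0 < y) :
    HasDerivAt (fun x => x ^ p * exp (-x / 2))
      ((p * y ^ (p - 1) - y ^ p / 2) * exp (-y / 2)) y := by
  refine ((hasDerivAt_rpow_const (Or.inl hy.ne')).mul
    ((hasDerivAt_neg y).div_const 2).exp).congr_deriv ?_
  ring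

lemma abs_deriv_rpow_mul_exp_neg_half_le (p : ℝ) {y : ℝ} (hy : 0 < y) :
    |(p * y ^ (p - 1) - y ^ p / 2) * exp (-y / 2)| ≤
      (|p| + 1) * max (y ^ (p - 1)) (y ^ p) * exp (-y / 2) := by
  rw [abs_mul, abs_of_pos (exp_pos _)]
  gcongr
  have h₁ : y ^ (p - 1) ≤ max (y ^ (p - 1)) (y ^ p) := le_max_left _ _
  have h₂ : y ^ p ≤ max (y ^ (p - 1)) (y ^ p) := le_max_right _ _
  calc |p * y ^ (p - 1) - y ^ p / 2| ≤ |p| * y ^ (p - 1) + y ^ p := by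
        rw [abs_sub_comm]
        refine (abs_sub _ _).trans ?_
        rw [abs_mul, abs_of_pos (rpow_pos_of_pos hy _), abs_of_pos (by positivity)]
        linarith [rpow_pos_of_pos hy p]
    _ ≤ (|p| + 1) * max (y ^ (p - 1)) (y ^ p) := by
        nlinarith [abs_nonneg p]

lemma exists_rpow_mul_exp_neg_div_four_le (p : ℝ) :
    ∃ B, ∀ y ≥ 1, y ^ p * exp (-y / 4) ≤ B := by
  obtain ⟨n, hn⟩ := exists_nat_ge p
  refine ⟨4 ^ n * n.factorial, fun y hy => ?_⟩
  have hexp := pow_div_factorial_le_exp _ (by positivity : 0 ≤ y / 4) n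
  calc y ^ p * exp (-y / 4) ≤ y ^ (n : ℝ) * exp (-y / 4) := by
        gcongr
    _ = 4 ^ n * n.factorial * ((y / 4) ^ n / n.factorial) * exp (-y / 4) := by
        rw [rpow_natCast, div_pow]
        field_simp
    _ ≤ 4 ^ n * n.factorial * exp (y / 4) * exp (-y / 4) := by gcongr
    _ = 4 ^ n * n.factorial := by
        rw [mul_assoc, ← exp_add, show y / 4 + -y / 4 = 0 by ring, exp_zero, mul_one]

/-- The function `ρ ν` of the paper, up to the normalising constant `2^{k/2} Γ(k/2)`,
with `a = k/2 - 1`. -/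
noncomputable def weightedChiKernel (a : ℝ) : ℝ → ℝ :=
  (Ioi 0).indicator fun x => min 1 (√x) * (x ^ a * exp (-x / 2))

section WeightedChiKernel

variable {a x : ℝ}

lemma weightedChiKernel_of_nonpos (hx : x ≤ 0) : weightedChiKernel a x = 0 :=
  indicator_of_notMem (notMem_Ioi.2 hx) _

lemma weightedChiKernel_of_pos (hx : 0 < x) :
    weightedChiKernel a x = min 1 (√x) * (x ^ a * exp (-x / 2)) :=
  indicator_of_mem hx _

lemma weightedChiKernel_of_le_one (hx₀ : 0 < x) (hx₁ : x ≤ 1) :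
    weightedChiKernel a x = x ^ (a + 1 / 2) * exp (-x / 2) := by
  rw [weightedChiKernel_of_pos hx₀, min_eq_right (sqrt_le_one.2 hx₁), sqrt_eq_rpow,
    rpow_add hx₀]
  ring

lemma weightedChiKernel_of_one_le (hx : 1 ≤ x) :
    weightedChiKernel a x = x ^ a * exp (-x / 2) := by
  rw [weightedChiKernel_of_pos (by linarith), min_eq_left (one_le_sqrt.2 hx), one_mul]

lemma weightedChiKernel_nonneg (a x : ℝ) : 0 ≤ weightedChiKernel a x :=
  indicator_nonneg (fun y (hy : 0 < y) => by positivity) x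

lemma weightedChiKernel_le (hx : 0 < x) :
    weightedChiKernel a x ≤ x ^ (a + 1 / 2) * exp (-x / 2) := by
  rw [weightedChiKernel_of_pos hx]
  calc min 1 √x * (x ^ a * exp (-x / 2)) ≤ √x * (x ^ a * exp (-x / 2)) := by
        gcongr
        exact min_le_right _ _
    _ = x ^ (a + 1 / 2) * exp (-x / 2) := by
        rw [rpow_add hx, sqrt_eq_rpow]
        ring

lemma continuousOn_weightedChiKernel : ContinuousOn (weightedChiKernel a) (Ioi 0) := by
  have hrpow : ContinuousOn (fun x : ℝ => x ^ a) (Ioi 0) := fun x hx =>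
    (continuousAt_rpow_const x a (Or.inl (ne_of_gt hx))).continuousWithinAt
  refine ContinuousOn.congr ?_ fun x hx => weightedChiKernel_of_pos hx
  exact (continuous_const.min continuous_sqrt).continuousOn.mul
    (hrpow.mul (by fun_prop))

lemma integrable_weightedChiKernel (ha : -3 / 2 < a) : Integrable (weightedChiKernel a) := by
  have hdom : IntegrableOn (fun x => x ^ (a + 1 / 2) * exp (-x / 2)) (Ioi 0) := by
    convert integrableOn_rpow_mul_exp_neg_mul_rpow (s := a + 1 / 2) (b := 1 / 2)
      (by linarith) one_pos one_half_pos using 3 with x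
    rw [rpow_one]
    ring_nf
  have hcont := continuousOn_weightedChiKernel (a := a)
  rw [weightedChiKernel, integrable_indicator_iff measurableSet_Ioi]
  refine hdom.mono' ((hcont.congr fun x hx => (weightedChiKernel_of_pos hx).symm)
    |>.aestronglyMeasurable measurableSet_Ioi) ((ae_restrict_iff' measurableSet_Ioi).2
      (Eventually.of_forall fun x hx => ?_))
  rw [← weightedChiKernel_of_pos hx, norm_of_nonneg (weightedChiKernel_nonneg a x)]
  exact weightedChiKernel_le hx

lemma exists_hasDerivWithinAt_Ici_weightedChiKernel {q : ℝ} (hq : q ≤ a - 1 / 2) :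
    ∃ K M : ℝ, 0 ≤ K ∧ 0 ≤ M ∧ ∀ y > 0, ∃ d,
      HasDerivWithinAt (weightedChiKernel a) d (Ici y) y ∧ |d| ≤ K * y ^ q + M * exp (-y / 4) := by
  obtain ⟨B, hB⟩ := exists_rpow_mul_exp_neg_div_four_le a
  have hB₀ : 0 ≤ B := (by positivity : (0 : ℝ) ≤ 1 ^ a * exp (-1 / 4)).trans (hB 1 le_rfl)
  refine ⟨|a + 1 / 2| + 1, (|a| + 1) * B, by positivity, by positivity, fun y hy => ?_⟩
  rcases lt_or_ge y 1 with hy₁ | hy₁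
  · refine ⟨_, ((hasDerivAt_rpow_mul_exp_neg_half (a + 1 / 2) hy).congr_of_eventuallyEq
      (eventually_of_mem (Ioo_mem_nhds hy hy₁) fun x hx =>
        weightedChiKernel_of_le_one hx.1 hx.2.le)).hasDerivWithinAt, ?_⟩
    have hbound := abs_deriv_rpow_mul_exp_neg_half_le (a + 1 / 2) hy
    rw [max_eq_left (rpow_le_rpow_of_exponent_ge hy hy₁.le (by linarith))] at hbound
    calc _ ≤ (|a + 1 / 2| + 1) * y ^ (a + 1 / 2 - 1) * exp (-y / 2) := hbound
      _ ≤ (|a + 1 / 2| + 1) * y ^ q * 1 :=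
          mul_le_mul (mul_le_mul_of_nonneg_left
            (rpow_le_rpow_of_exponent_ge hy hy₁.le (by linarith)) (by positivity))
            (exp_le_one_iff.2 (by linarith)) (exp_pos _).le (by positivity)
      _ ≤ _ := by rw [mul_one]; exact le_add_of_nonneg_right (by positivity)
  · refine ⟨_, ((hasDerivAt_rpow_mul_exp_neg_half a hy).hasDerivWithinAt).congr
      (fun x hx => weightedChiKernel_of_one_le (hy₁.trans hx))
      (weightedChiKernel_of_one_le hy₁), ?_⟩
    have hbound := abs_deriv_rpow_mul_exp_neg_half_le a hy
    rw [max_eq_right (rpow_le_rpow_of_exponent_le hy₁ (by linarith))] at hbound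
    calc _ ≤ (|a| + 1) * y ^ a * exp (-y / 2) := hbound
      _ = (|a| + 1) * (y ^ a * exp (-y / 4)) * exp (-y / 4) := by
          rw [mul_assoc _ (y ^ a), mul_assoc, mul_assoc, ← exp_add]
          ring_nf
      _ ≤ (|a| + 1) * B * exp (-y / 4) := by gcongr; exact hB y hy₁
      _ ≤ _ := le_add_of_nonneg_left (by positivity)

lemma exists_abs_weightedChiKernel_add_sub_le {q : ℝ} (hq₀ : q ≤ 0) (hq : q ≤ a - 1 / 2) :
    ∃ K M : ℝ, 0 ≤ K ∧ 0 ≤ M ∧ ∀ x > 0, ∀ h > 0,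
      |weightedChiKernel a (x + h) - weightedChiKernel a x| ≤
        (K * x ^ q + M * exp (-x / 4)) * h := by
  obtain ⟨K, M, hK, hM, hderiv⟩ := exists_hasDerivWithinAt_Ici_weightedChiKernel hq
  choose! d hd hdb using hderiv
  refine ⟨K, M, hK, hM, fun x hx h hh => ?_⟩
  have hpos : ∀ y ∈ Icc x (x + h), 0 < y := fun y hy => hx.trans_le hy.1
  have hmvt := norm_image_sub_le_of_norm_deriv_right_le_segment
    (C := K * x ^ q + M * exp (-x / 4)) (continuousOn_weightedChiKernel.mono hpos)
    (fun y hy => hd y (hpos y (Ico_subset_Icc_self hy)))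
    (fun y hy => (hdb y (hpos y (Ico_subset_Icc_self hy))).trans ?_)
    (x + h) ⟨by linarith, le_rfl⟩
  · simpa only [add_sub_cancel_left, Real.norm_eq_abs] using hmvt
  · exact add_le_add (mul_le_mul_of_nonneg_left (rpow_le_rpow_of_nonpos hx hy.1 hq₀) hK)
      (mul_le_mul_of_nonneg_left (exp_le_exp.2 (by linarith [hy.1])) hM)

theorem exists_integral_abs_weightedChiKernel_add_sub_le {lam : ℝ} (ha : -3 / 2 < a)
    (hl₁ : lam < 1) (hla : lam ≤ a + 3 / 2) :
    ∃ C, 0 < C ∧ ∀ h ∈ Icc (-1:ℝ) 1,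
      ∫ x, |weightedChiKernel a (x + h) - weightedChiKernel a x| ≤ C * |h| ^ lam := by
  obtain ⟨K, M, hK, hM, hlip⟩ :=
    exists_abs_weightedChiKernel_add_sub_le (a := a) (q := lam - 2) (by linarith) (by linarith)
  have hsmall : ∀ x > 0, |weightedChiKernel a x| ≤ 1 * x ^ (a + 1 / 2) := fun x hx => by
    rw [abs_of_nonneg (weightedChiKernel_nonneg a x), one_mul]
    exact (weightedChiKernel_le hx).trans
      (mul_le_of_le_one_right (by positivity) (exp_le_one_iff.2 (by linarith)))
  obtain ⟨C, hC, hCb⟩ := exists_integral_abs_comp_add_sub_le_rpow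
    (integrable_weightedChiKernel ha) (fun _ => weightedChiKernel_of_nonpos) (by linarith)
    hsmall (by linarith) hK hM hlip (by linarith) (by linarith) hl₁.le
  exact ⟨C, hC, integral_abs_comp_add_sub_le_mul_abs_rpow hC.le hCb⟩

end WeightedChiKernel

/-- Let `ν` be the χ² density with `k > 0` degrees of freedom and `ρ(x) = min{1,√x}`.
Then `x ↦ ρ(x)ν(x)` (extended by 0) satisfies, for every `λ ∈ (0, min{k/2, 1})`, a
Besov-type estimate `∫ |ρν(x+h) − ρν(x)| dx ≤ C |h|^λ` for `h ∈ [-1,1]`. -/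
theorem chi_square_density_besov (k : ℝ) (hk : 0 < k)
    (ν f : ℝ → ℝ)
    (hν : ν = fun x => if 0 < x then
      x ^ (k/2 - 1) * Real.exp (-x/2) / (2 ^ (k/2) * Real.Gamma (k/2)) else 0)
    (hf : f = fun x => (min 1 (Real.sqrt x)) * ν x) :
    ∀ lam ∈ Set.Ioo (0:ℝ) (min (k/2) 1), ∃ C : ℝ, 0 < C ∧
      ∀ h ∈ Set.Icc (-1:ℝ) 1,
        (∫ x : ℝ, |f (x + h) - f x|) ≤ C * |h| ^ lam := by
  rintro lam ⟨-, hlam⟩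
  set c := 2 ^ (k / 2) * Gamma (k / 2)
  have hc : 0 < c := mul_pos (rpow_pos_of_pos two_pos _) (Gamma_pos_of_pos (by linarith))
  have hfK : f = fun x => weightedChiKernel (k / 2 - 1) x / c := by
    subst hf hν
    funext x
    rcases lt_or_ge 0 x with hx | hx
    · simp only [if_pos hx, weightedChiKernel_of_pos hx]
      ring
    · simp only [if_neg hx.not_gt, weightedChiKernel_of_nonpos hx, mul_zero, zero_div]
  obtain ⟨C, hC, hCb⟩ := exists_integral_abs_weightedChiKernel_add_sub_le (a := k / 2 - 1)
    (by linarith) (hlam.trans_le (min_le_right _ _)) (by linarith [min_le_left (k / 2) 1])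
  refine ⟨C / c, div_pos hC hc, fun h hh => ?_⟩
  simp only [hfK, ← sub_div, abs_div, abs_of_pos hc, integral_div, div_mul_eq_mul_div]
  exact div_le_div_of_nonneg_right (hCb h hh) hc.le
end
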